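/- For p = (p₁, p₂) ∈ ℝ², the disc that is internally tangent to the circle of radius (√3 − 1)|p| centred at the origin and externally tangent to both circles of radius |p| centred at p and −p has centre ±(1/√3)(−p₂, p₁) and radius (2/√3 − 1)|p|. -/

import Mathlib

/-- Euclidean norm on `ℝ²` (as pairs). -/
noncomputable def enormR (v : ℝ × ℝ) : ℝ :=
  Real.sqrt (v.1 ^ 2 + v.2 ^ 2)

lemma enormR_nonneg (v : ℝ × ℝ) : 0 ≤ enormR v := Real.sqrt_nonneg _

lemma enormR_sq (v : ℝ × ℝ) : enormR v ^ 2 = v.1 ^ 2 + v.2 ^ 2 :=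
  Real.sq_sqrt (by positivity)

theorem inscribed_disc_centre_radius (p : ℝ × ℝ) (hp : p ≠ 0)
    (c : ℝ × ℝ) (r : ℝ) (hr : 0 < r)
    (hinner : enormR c + r = (Real.sqrt 3 - 1) * enormR p)
    (htplus : enormR (c - p) = enormR p + r)
    (htminus : enormR (c + p) = enormR p + r) :
    (c = (1 / Real.sqrt 3) • ((-p.2, p.1) : ℝ × ℝ) ∨
      c = -((1 / Real.sqrt 3) • ((-p.2, p.1) : ℝ × ℝ))) ∧
    r = (2 / Real.sqrt 3 - 1) * enormR p := by
  set s := enormR p with hs_def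
  have hpne : p.1 ≠ 0 ∨ p.2 ≠ 0 := by
    by_contra h
    push_neg at h
    exact hp (Prod.ext h.1 h.2)
  have hp2 : 0 < p.1 ^ 2 + p.2 ^ 2 := by
    rcases hpne with h | h <;> positivity
  have hs : 0 < s := Real.sqrt_pos.mpr hp2
  have hps : p.1 ^ 2 + p.2 ^ 2 = s ^ 2 := (enormR_sq p).symm
  have h3 : Real.sqrt 3 ^ 2 = 3 := Real.sq_sqrt (by norm_num)
  have h3pos : (0:ℝ) < Real.sqrt 3 := Real.sqrt_pos.mpr (by norm_num)
  -- squared tangency conditions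
  have h1 : (c.1 - p.1) ^ 2 + (c.2 - p.2) ^ 2 = (s + r) ^ 2 := by
    have := enormR_sq (c - p)
    rw [htplus] at this
    simpa using this.symm
  have h2 : (c.1 + p.1) ^ 2 + (c.2 + p.2) ^ 2 = (s + r) ^ 2 := by
    have := enormR_sq (c + p)
    rw [htminus] at this
    simpa using this.symm
  have hcp : c.1 * p.1 + c.2 * p.2 = 0 := by nlinarith [h1, h2]
  have hcnorm : enormR c = (Real.sqrt 3 - 1) * s - r := by linarith
  have hc2 : c.1 ^ 2 + c.2 ^ 2 = ((Real.sqrt 3 - 1) * s - r) ^ 2 := by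
    have := enormR_sq c
    rw [hcnorm] at this
    linarith
  -- the key radius equation
  have hkey : Real.sqrt 3 * r = (2 - Real.sqrt 3) * s := by
    nlinarith [h1, hc2, hcp, hps, h3]
  have h3ne : Real.sqrt 3 ≠ 0 := ne_of_gt h3pos
  have hrval : r = (2 / Real.sqrt 3 - 1) * s := by
    have heq : Real.sqrt 3 * r = Real.sqrt 3 * ((2 / Real.sqrt 3 - 1) * s) := by
      rw [hkey]
      field_simp
    exact mul_left_cancel₀ h3ne heq
  -- c is perpendicular to p
  set t : ℝ := (c.2 * p.1 - c.1 * p.2) / (p.1 ^ 2 + p.2 ^ 2) with ht_def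
  have hc1 : c.1 = -t * p.2 := by
    rw [ht_def]
    field_simp [ne_of_gt hp2]
    linear_combination p.1 * hcp
  have hc2' : c.2 = t * p.1 := by
    rw [ht_def]
    field_simp [ne_of_gt hp2]
    linear_combination p.2 * hcp
  -- |c|^2 = s^2/3
  have hcsq : c.1 ^ 2 + c.2 ^ 2 = s ^ 2 / 3 := by
    rw [hc2, hrval]
    field_simp
    linear_combination (3 * Real.sqrt 3 ^ 2 - 4) * h3
  have ht2 : t ^ 2 = 1 / 3 := by
    have h' : t ^ 2 * (p.1 ^ 2 + p.2 ^ 2) = s ^ 2 / 3 := by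
      rw [← hcsq, hc1, hc2']; ring
    rw [hps] at h'
    have hs2 : s ^ 2 ≠ 0 := by positivity
    apply mul_right_cancel₀ hs2
    rw [h']; ring
  have htcases : t = 1 / Real.sqrt 3 ∨ t = -(1 / Real.sqrt 3) := by
    have hprod : (t - 1 / Real.sqrt 3) * (t + 1 / Real.sqrt 3) = 0 := by
      have hh : t ^ 2 - (1 / Real.sqrt 3) ^ 2 = 0 := by
        rw [ht2, div_pow, one_pow, h3]
        norm_num
      linear_combination hh
    rcases mul_eq_zero.mp hprod with h | h
    · left; linarith
    · right; linarith
  constructor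
  · rcases htcases with h | h
    · left
      apply Prod.ext
      · simp [hc1, h]
      · simp [hc2', h]
    · right
      apply Prod.ext
      · simp [hc1, h]
      · simp [hc2', h]
  · exact hrval
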